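/- arXiv:1410.1124 — 2 statements merged into one kernel-verified Lean document; each statement's English description precedes it below -/
import Mathlib

section
/- There exists a family (ω_C), indexed by the chambers of the arrangement defined by Σ, of functions ω_C : V → [0,1] satisfying: (1) for every chamber C and every X₀ ∈ V there exists c ∈ ℝ such that for all X ∈ V and all α ∈ Σ_C, if α(X − X₀) < c then ω_C(X) = 0; and (2) Σ_C ω_C(X) = 1 for every X ∈ V, the sum running over all chambers C. -/
open Set

/-- The set of regular points of the arrangement defined by the finite set `S`
of linear forms: the complement of the union of the kernels. -/
def regularSet {V : Type*} [NormedAddCommGroup V] [NormedSpace ℝ V]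
    (S : Finset (V →ₗ[ℝ] ℝ)) : Set V :=
  {v | ∀ α ∈ S, α v ≠ 0}

/-- A chamber of the arrangement defined by `S` is a connected component of the
set of regular points. -/
def IsChamber {V : Type*} [NormedAddCommGroup V] [NormedSpace ℝ V]
    (S : Finset (V →ₗ[ℝ] ℝ)) (C : Set V) : Prop :=
  ∃ x ∈ regularSet S, C = connectedComponentIn (regularSet S) x

/-- `posForms S C` is the set `Σ_C` of elements of `S` that are positive on `C`. -/
def posForms {V : Type*} [NormedAddCommGroup V] [NormedSpace ℝ V]
    (S : Finset (V →ₗ[ℝ] ℝ)) (C : Set V) : Set (V →ₗ[ℝ] ℝ) :=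
  {α | α ∈ S ∧ ∀ x ∈ C, 0 < α x}

open Filter Topology

/-!
Fix a vector `e` on which no form of `S` vanishes. For each `X`, the point `X + t • e` with
`t > 0` small is regular, and every form negative at `X` stays negative there. Let `ω_C(X)` be
`1` if this point lies in `C` and `0` otherwise. Exactly one chamber contains a regular point,
which gives (2); and if `α ∈ Σ_C` is negative at `X`, which holds once `α (X - X₀)` is below
`-∑_β |β X₀|`, the perturbed point is not in `C`, which gives (1).
-/

theorem exists_forall_apply_ne_zero {V : Type*} [AddCommGroup V] [Module ℝ V]
    (S : Finset (V →ₗ[ℝ] ℝ)) (hne : ∀ α ∈ S, α ≠ 0) :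
    ∃ e : V, ∀ α ∈ S, α e ≠ 0 := by
  obtain ⟨-, e, -, he⟩ := ssubset_iff_exists.1 <|
    Submodule.iUnion_ssubset_of_forall_ne_top_of_card_lt S.attach
      (fun α => LinearMap.ker α.1) (fun α => LinearMap.ker_eq_top.not.2 (hne α α.2))
      (by simp)
  exact ⟨e, fun α hα hαe => he (by simpa using ⟨α, hα, hαe⟩)⟩

theorem eventually_apply_add_smul_ne_zero_and_neg {V : Type*} [AddCommGroup V] [Module ℝ V]
    (α : V →ₗ[ℝ] ℝ) {e : V} (he : α e ≠ 0) (X : V) :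
    ∀ᶠ t in 𝓝[>] (0 : ℝ), α (X + t • e) ≠ 0 ∧ (α X < 0 → α (X + t • e) < 0) := by
  have hlin : ∀ t : ℝ, α (X + t • e) = α X + t * α e := fun t => by simp
  simp only [hlin]
  have hlim : Tendsto (fun t : ℝ => α X + t * α e) (𝓝[>] 0) (𝓝 (α X)) := by
    have hcont : Continuous (fun t : ℝ => α X + t * α e) := by fun_prop
    simpa using (hcont.tendsto 0).mono_left nhdsWithin_le_nhds
  rcases lt_trichotomy (α X) 0 with hneg | hzero | hpos
  · filter_upwards [hlim.eventually (gt_mem_nhds hneg)] with t ht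
    exact ⟨ht.ne, fun _ => ht⟩
  · filter_upwards [self_mem_nhdsWithin] with t (ht : 0 < t)
    simp [hzero, ht.ne', he]
  · filter_upwards [hlim.eventually (lt_mem_nhds hpos)] with t ht
    exact ⟨ht.ne', fun h => absurd h hpos.not_gt⟩

theorem exists_mem_regularSet_forall_neg {V : Type*} [NormedAddCommGroup V] [NormedSpace ℝ V]
    (S : Finset (V →ₗ[ℝ] ℝ)) (hne : ∀ α ∈ S, α ≠ 0) (X : V) :
    ∃ y ∈ regularSet S, ∀ α ∈ S, α X < 0 → α y < 0 := by
  obtain ⟨e, he⟩ := exists_forall_apply_ne_zero S hne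
  obtain ⟨t, ht⟩ := ((eventually_all_finset S).2 fun α hα =>
    eventually_apply_add_smul_ne_zero_and_neg α (he α hα) X).exists
  exact ⟨X + t • e, fun α hα => (ht α hα).1, fun α hα => (ht α hα).2⟩

theorem isChamber_and_mem_iff {V : Type*} [NormedAddCommGroup V] [NormedSpace ℝ V]
    {S : Finset (V →ₗ[ℝ] ℝ)} {p : V} (hp : p ∈ regularSet S) {C : Set V} :
    IsChamber S C ∧ p ∈ C ↔ C = connectedComponentIn (regularSet S) p := by
  constructor
  · rintro ⟨⟨x, -, rfl⟩, hpC⟩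
    exact connectedComponentIn_eq hpC
  · rintro rfl
    exact ⟨⟨p, hp, rfl⟩, mem_connectedComponentIn hp⟩

theorem finsum_isChamber_indicator_one {V : Type*} [NormedAddCommGroup V] [NormedSpace ℝ V]
    {S : Finset (V →ₗ[ℝ] ℝ)} {p : V} (hp : p ∈ regularSet S) :
    ∑ᶠ C ∈ {C : Set V | IsChamber S C}, C.indicator (1 : V → ℝ) p = 1 := by
  calc ∑ᶠ C ∈ {C : Set V | IsChamber S C}, C.indicator (1 : V → ℝ) p
      = ∑ᶠ C ∈ ({connectedComponentIn (regularSet S) p} : Set (Set V)),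
          C.indicator (1 : V → ℝ) p := by
        refine finsum_mem_inter_support_eq' _ _ _ fun C hC => ?_
        have hpC : p ∈ C := by_contra fun h => hC (indicator_of_notMem h _)
        simpa [hpC] using isChamber_and_mem_iff hp (C := C)
    _ = 1 := by
        rw [finsum_mem_singleton, indicator_of_mem (mem_connectedComponentIn hp), Pi.one_apply]

theorem apply_neg_of_apply_sub_lt {V : Type*} [AddCommGroup V] [Module ℝ V]
    {S : Finset (V →ₗ[ℝ] ℝ)} {α : V →ₗ[ℝ] ℝ} (hα : α ∈ S) {X X₀ : V}
    (h : α (X - X₀) < -∑ β ∈ S, |β X₀|) : α X < 0 := by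
  have hX₀ : α X₀ ≤ ∑ β ∈ S, |β X₀| :=
    (le_abs_self _).trans (Finset.single_le_sum (fun β _ => abs_nonneg (β X₀)) hα)
  rw [map_sub] at h
  linarith

theorem exists_omega_family_general {V : Type*}
    [NormedAddCommGroup V] [NormedSpace ℝ V]
    (S : Finset (V →ₗ[ℝ] ℝ))
    (hne : ∀ α ∈ S, α ≠ 0) :
    ∃ ω : Set V → V → ℝ,
      (∀ C : Set V, IsChamber S C → ∀ X : V, ω C X ∈ Set.Icc (0 : ℝ) 1) ∧
      (∀ C : Set V, IsChamber S C → ∀ X₀ : V, ∃ c : ℝ, ∀ X : V,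
        ∀ α ∈ posForms S C, α (X - X₀) < c → ω C X = 0) ∧
      (∀ X : V, ∑ᶠ C ∈ {C : Set V | IsChamber S C}, ω C X = 1) := by
  choose y hy_reg hy_neg using exists_mem_regularSet_forall_neg S hne
  refine ⟨fun C X => C.indicator 1 (y X), fun C _ X => ?_, fun C _ X₀ => ?_,
    fun X => finsum_isChamber_indicator_one (hy_reg X)⟩
  · exact ⟨indicator_nonneg (fun _ _ => zero_le_one) _,
      indicator_le_self' (fun _ _ => zero_le_one) _⟩
  · refine ⟨-∑ β ∈ S, |β X₀|, fun X α hα hlt => indicator_of_notMem (fun hyC => ?_) _⟩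
    exact (hα.2 _ hyC).not_gt (hy_neg X α hα.1 (apply_neg_of_apply_sub_lt hα.1 hlt))

/-- There exists a family `(ω_C)` indexed by the chambers, with values in `[0,1]`,
satisfying: (1) for each chamber `C` and each `X₀` there is `c ∈ ℝ` such that
`ω_C(X) = 0` as soon as `α(X − X₀) < c` for some `α ∈ Σ_C`; and
(2) `∑_C ω_C(X) = 1` for all `X`. -/
theorem exists_omega_family {V : Type*}
    [NormedAddCommGroup V] [NormedSpace ℝ V] [FiniteDimensional ℝ V]
    (S : Finset (V →ₗ[ℝ] ℝ))
    (hne : ∀ α ∈ S, α ≠ 0) (hsymm : ∀ α ∈ S, -α ∈ S) :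
    ∃ ω : Set V → V → ℝ,
      (∀ C : Set V, IsChamber S C → ∀ X : V, ω C X ∈ Set.Icc (0 : ℝ) 1) ∧
      (∀ C : Set V, IsChamber S C → ∀ X₀ : V, ∃ c : ℝ, ∀ X : V,
        ∀ α ∈ posForms S C, α (X - X₀) < c → ω C X = 0) ∧
      (∀ X : V, ∑ᶠ C ∈ {C : Set V | IsChamber S C}, ω C X = 1) :=
  exists_omega_family_general S hne
end

section
/- Let (ω_C) be a family, indexed by the chambers of the arrangement defined by Σ, of functions ω_C : V → [0,1] satisfying: (1) for every chamber C and every X₀ ∈ V there exists c ∈ ℝ such that for all X ∈ V and all α ∈ Σ_C, if α(X − X₀) < c then ω_C(X) = 0; and (2) Σ_C ω_C(X) = 1 for every X ∈ V, the sum running over all chambers C. Then the family also satisfies: (3) for every chamber C and every X₀ ∈ V there exists c ∈ ℝ such that ω_C(X) = 1 for every X ∈ V with α(X − X₀) > c for all α ∈ Σ_C. -/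
open Set

/-! Every chamber is the convex set of regular points with a fixed sign pattern; hence there are
finitely many chambers, and two distinct chambers `C ≠ D` are separated by some `α ∈ Σ_D` with
`-α ∈ Σ_C`. If every form of `Σ_C` is large at `X - X₀`, each such `α` is very negative there, so
condition (1), with a threshold taken uniformly over the finitely many chambers, gives
`ω_D(X) = 0` for all `D ≠ C`, and condition (2) leaves `ω_C(X) = 1`. -/

lemma IsPreconnected.pos_of_ne_zero {X : Type*} [TopologicalSpace X] {s : Set X}
    (hs : IsPreconnected s) {f : X → ℝ} (hf : ContinuousOn f s) (h0 : ∀ y ∈ s, f y ≠ 0)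
    {x y : X} (hx : x ∈ s) (hfx : 0 < f x) (hy : y ∈ s) : 0 < f y := by
  by_contra! hfy
  obtain ⟨z, hz, hfz⟩ := hs.intermediate_value hy hx hf ⟨hfy, hfx.le⟩
  exact h0 z hz hfz

section Chambers

variable {V : Type*} [NormedAddCommGroup V] [NormedSpace ℝ V] {S : Finset (V →ₗ[ℝ] ℝ)}

lemma pos_of_mem_connectedComponentIn_regularSet [FiniteDimensional ℝ V] {α : V →ₗ[ℝ] ℝ}
    (hα : α ∈ S) {x y : V} (hx : x ∈ regularSet S) (hαx : 0 < α x)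
    (hy : y ∈ connectedComponentIn (regularSet S) x) : 0 < α y :=
  isPreconnected_connectedComponentIn.pos_of_ne_zero
    α.continuous_of_finiteDimensional.continuousOn
    (fun _ hz => (connectedComponentIn_subset _ _ hz : _ ∈ regularSet S) α hα)
    (mem_connectedComponentIn hx) hαx hy

lemma mem_posForms_connectedComponentIn [FiniteDimensional ℝ V] {α : V →ₗ[ℝ] ℝ} (hα : α ∈ S)
    {x : V} (hx : x ∈ regularSet S) (hαx : 0 < α x) :
    α ∈ posForms S (connectedComponentIn (regularSet S) x) :=
  ⟨hα, fun _ hy => pos_of_mem_connectedComponentIn_regularSet hα hx hαx hy⟩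

lemma mem_connectedComponentIn_regularSet_of_signs {x y : V} (hx : x ∈ regularSet S)
    (hxy : ∀ α ∈ S, 0 < α x * α y) : y ∈ connectedComponentIn (regularSet S) x := by
  have hK : Convex ℝ {v : V | ∀ α ∈ S, 0 < α x * α v} := by
    simp only [Set.ofPred_forall]
    exact convex_iInter₂ fun α _ => convex_halfSpace_gt (α x • α).isLinear 0
  refine hK.isPreconnected.subset_connectedComponentIn (fun α hα => ?_) ?_ hxy
  · exact mul_self_pos.mpr (hx α hα)
  · exact fun v hv α hα hαv => by simpa [hαv] using hv α hα

lemma posForms_injOn [FiniteDimensional ℝ V] : Set.InjOn (posForms S) {C | IsChamber S C} := by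
  rintro _ ⟨x, hx, rfl⟩ _ ⟨y, hy, rfl⟩ hxy
  refine connectedComponentIn_eq (mem_connectedComponentIn_regularSet_of_signs hx fun α hα => ?_)
  have hsign : 0 < α x ↔ 0 < α y :=
    ⟨fun h => (hxy ▸ mem_posForms_connectedComponentIn hα hx h).2 y (mem_connectedComponentIn hy),
      fun h => (hxy ▸ mem_posForms_connectedComponentIn hα hy h).2 x (mem_connectedComponentIn hx)⟩
  rcases (hx α hα).lt_or_gt with h | h
  · exact mul_pos_of_neg_of_neg h ((hy α hα).lt_or_gt.resolve_right (mt hsign.mpr h.not_gt))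
  · exact mul_pos h (hsign.mp h)

lemma finite_setOf_isChamber [FiniteDimensional ℝ V] : {C | IsChamber S C}.Finite :=
  .of_finite_image (S.finite_toSet.finite_subsets.subset <| by
    rintro _ ⟨C, -, rfl⟩ α hα
    exact hα.1) posForms_injOn

lemma exists_mem_posForms_neg_mem_posForms [FiniteDimensional ℝ V]
    (hsymm : ∀ α ∈ S, -α ∈ S) {C D : Set V} (hC : IsChamber S C) (hD : IsChamber S D)
    (hCD : C ≠ D) : ∃ α ∈ posForms S C, -α ∈ posForms S D := by
  obtain ⟨x, hx, rfl⟩ := hC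
  obtain ⟨y, hy, rfl⟩ := hD
  obtain ⟨α, hα, hαxy⟩ : ∃ α ∈ S, α x * α y < 0 := by
    by_contra! h
    refine hCD (connectedComponentIn_eq (mem_connectedComponentIn_regularSet_of_signs hx
      fun α hα => (h α hα).lt_of_ne ?_))
    exact (mul_ne_zero (hx α hα) (hy α hα)).symm
  rcases mul_neg_iff.mp hαxy with ⟨hαx, hαy⟩ | ⟨hαx, hαy⟩
  · exact ⟨α, mem_posForms_connectedComponentIn hα hx hαx,
      mem_posForms_connectedComponentIn (hsymm α hα) hy (by simpa using hαy)⟩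
  · refine ⟨-α, mem_posForms_connectedComponentIn (hsymm α hα) hx (by simpa using hαx), ?_⟩
    simpa using mem_posForms_connectedComponentIn hα hy hαy

end Chambers

theorem omega_family_condition_three_general {V : Type*}
    [NormedAddCommGroup V] [NormedSpace ℝ V] [FiniteDimensional ℝ V]
    (S : Finset (V →ₗ[ℝ] ℝ))
    (hsymm : ∀ α ∈ S, -α ∈ S)
    (ω : Set V → V → ℝ)
    (h1 : ∀ C : Set V, IsChamber S C → ∀ X₀ : V, ∃ c : ℝ, ∀ X : V,
      ∀ α ∈ posForms S C, α (X - X₀) < c → ω C X = 0)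
    (h2 : ∀ X : V, ∑ᶠ C ∈ {C : Set V | IsChamber S C}, ω C X = 1) :
    ∀ C : Set V, IsChamber S C → ∀ X₀ : V, ∃ c : ℝ, ∀ X : V,
      (∀ α ∈ posForms S C, c < α (X - X₀)) → ω C X = 1 := by
  intro C hC X₀
  choose! c hc using h1
  obtain ⟨b, hb⟩ := (finite_setOf_isChamber.image fun D => -c D X₀).bddAbove
  refine ⟨b, fun X hX => ?_⟩
  have hvanish : ∀ D, IsChamber S D → D ≠ C → ω D X = 0 := by
    intro D hD hDC
    obtain ⟨α, hαD, hαC⟩ := exists_mem_posForms_neg_mem_posForms hsymm hD hC hDC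
    have hαX : b < -α (X - X₀) := by simpa using hX (-α) hαC
    have hcb : -c D X₀ ≤ b := hb ⟨D, hD, rfl⟩
    exact hc D hD X₀ X α hαD (by linarith)
  have hsupport : ∀ D ∈ Function.support (ω · X), D ∈ ({C} : Set (Set V)) ↔ IsChamber S D :=
    fun D hD => ⟨fun hDC => hDC ▸ hC, fun hDch => by_contra fun hDC => hD (hvanish D hDch hDC)⟩
  rw [← finsum_mem_singleton (f := (ω · X)), ← h2 X]
  exact finsum_mem_inter_support_eq' _ _ _ hsupport

/-- If a family `(ω_C)` with values in `[0,1]` satisfies conditions (1) and (2) of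
section 1.1, then it satisfies (3): for each chamber `C` and each `X₀` there is
`c ∈ ℝ` such that `ω_C(X) = 1` whenever `α(X − X₀) > c` for all `α ∈ Σ_C`. -/
theorem omega_family_condition_three {V : Type*}
    [NormedAddCommGroup V] [NormedSpace ℝ V] [FiniteDimensional ℝ V]
    (S : Finset (V →ₗ[ℝ] ℝ))
    (hne : ∀ α ∈ S, α ≠ 0) (hsymm : ∀ α ∈ S, -α ∈ S)
    (ω : Set V → V → ℝ)
    (hrange : ∀ C : Set V, IsChamber S C → ∀ X : V, ω C X ∈ Set.Icc (0 : ℝ) 1)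
    (h1 : ∀ C : Set V, IsChamber S C → ∀ X₀ : V, ∃ c : ℝ, ∀ X : V,
      ∀ α ∈ posForms S C, α (X - X₀) < c → ω C X = 0)
    (h2 : ∀ X : V, ∑ᶠ C ∈ {C : Set V | IsChamber S C}, ω C X = 1) :
    ∀ C : Set V, IsChamber S C → ∀ X₀ : V, ∃ c : ℝ, ∀ X : V,
      (∀ α ∈ posForms S C, c < α (X - X₀)) → ω C X = 1 :=
  omega_family_condition_three_general S hsymm ω h1 h2
end
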